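/- arXiv:1506.08404 — 4 statements merged into one kernel-verified Lean document; each statement's English description precedes it below -/
import Mathlib

section
/- Let θ : ℤ^N → ℝ be a function taking only the values 0 and 1 (the characteristic function of a subset S of ℤ^N). If θ is almost periodic, then θ is periodic: there exists a nonzero p ∈ ℤ^N such that θ(k + p) = θ(k) for all k ∈ ℤ^N. -/
open BoundedContinuousFunction

/-- The translate `θ(· + h)` of a bounded function `θ : ℤ^N → ℝ`, as an element of
`ℓ^∞(ℤ^N)` (bounded (automatically continuous) functions on the discrete group `ℤ^N`
with the sup norm). -/
noncomputable def ZTranslate {N : ℕ} (θ : (Fin N → ℤ) →ᵇ ℝ) (h : Fin N → ℤ) :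
    (Fin N → ℤ) →ᵇ ℝ :=
  θ.compContinuous ⟨fun k => k + h, continuous_of_discreteTopology⟩

/-- an almost periodic `{0,1}`-valued function on `ℤ^N` is periodic. -/
theorem almostPeriodic_zeroOne_valued_is_periodic {N : ℕ} (hN : 0 < N)
    (θ : (Fin N → ℤ) →ᵇ ℝ) (hvals : ∀ k, θ k = 0 ∨ θ k = 1)
    (hap : IsCompact (closure (Set.range (ZTranslate θ)))) :
    ∃ p : Fin N → ℤ, p ≠ 0 ∧ ∀ k, θ (k + p) = θ k := by
  have hinf : Infinite (Fin N → ℤ) := by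
    have : Nonempty (Fin N) := ⟨⟨0, hN⟩⟩
    infer_instance
  -- translates of a {0,1}-valued function at distance < 1 are equal
  have key : ∀ h₁ h₂ : Fin N → ℤ, dist (ZTranslate θ h₁) (ZTranslate θ h₂) < 1 →
      ZTranslate θ h₁ = ZTranslate θ h₂ := by
    intro h₁ h₂ hd
    ext k
    have hk : dist (ZTranslate θ h₁ k) (ZTranslate θ h₂ k) < 1 :=
      lt_of_le_of_lt (dist_coe_le_dist k) hd
    have e1 : ZTranslate θ h₁ k = θ (k + h₁) := rfl
    have e2 : ZTranslate θ h₂ k = θ (k + h₂) := rfl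
    rw [e1, e2] at hk ⊢
    rcases hvals (k + h₁) with hv1 | hv1 <;> rcases hvals (k + h₂) with hv2 | hv2 <;>
      rw [hv1, hv2] at hk ⊢ <;> simp_all [Real.dist_eq, abs_of_nonneg, abs_of_nonpos]
  -- totally bounded range, cover by balls of radius 1/2
  have htb : TotallyBounded (Set.range (ZTranslate θ)) :=
    (hap.totallyBounded).subset subset_closure
  obtain ⟨t, ht, hcov⟩ := Metric.totallyBounded_iff.mp htb (1/2) (by norm_num)
  have : Finite t := ht.to_subtype
  have hchoice : ∀ h : Fin N → ℤ, ∃ y : t, ZTranslate θ h ∈ Metric.ball y.1 (1/2) := by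
    intro h
    have := hcov (Set.mem_range_self h)
    simp only [Set.mem_iUnion] at this
    obtain ⟨y, hy, hmem⟩ := this
    exact ⟨⟨y, hy⟩, hmem⟩
  choose g hg using hchoice
  obtain ⟨h₁, h₂, hne, hgeq⟩ := Finite.exists_ne_map_eq_of_infinite g
  have hdist : dist (ZTranslate θ h₁) (ZTranslate θ h₂) < 1 := by
    calc dist (ZTranslate θ h₁) (ZTranslate θ h₂)
        ≤ dist (ZTranslate θ h₁) (g h₁ : _) + dist (ZTranslate θ h₂) (g h₁ : _) :=
          dist_triangle_right _ _ _
      _ < 1/2 + 1/2 := by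
          apply add_lt_add (hg h₁)
          rw [hgeq]; exact hg h₂
      _ = 1 := by norm_num
  have heq := key h₁ h₂ hdist
  refine ⟨h₁ - h₂, sub_ne_zero.mpr hne, fun k => ?_⟩
  have h3 := DFunLike.congr_fun heq (k - h₂)
  have e1 : ZTranslate θ h₂ (k - h₂) = θ k := by
    show θ (k - h₂ + h₂) = θ k
    congr 1; abel
  have e2 : ZTranslate θ h₁ (k - h₂) = θ (k + (h₁ - h₂)) := by
    show θ (k - h₂ + h₁) = θ (k + (h₁ - h₂))
    congr 1; abel
  rw [e1, e2] at h3
  exact h3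
end

section
/- Existence and uniqueness of the mean value: for every almost periodic function u : ℝ^N → ℝ there exists a unique real constant M(u) such that the constant function with value M(u) belongs to the closure, in the supremum norm, of the convex hull of the set of translates {u(· + a) : a ∈ ℝ^N}. -/
open BoundedContinuousFunction

/-- The translate `u(· + a)` of a bounded continuous function on `ℝ^N`. -/
noncomputable def RTranslate {N : ℕ} (u : EuclideanSpace ℝ (Fin N) →ᵇ ℝ)
    (a : EuclideanSpace ℝ (Fin N)) : EuclideanSpace ℝ (Fin N) →ᵇ ℝ :=
  u.compContinuous ⟨fun y => y + a, by continuity⟩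

/-!
Let `K` be the closed convex hull of the translates of `u`. It is compact, convex and
translation invariant, so the continuous function `v ↦ sup v` attains its minimum on `K` at
some `v`. If `v` were not constant, say `v b < sup v = S`, average a finite `δ/2`-net of the
translates of `v`, where `δ = S - v b`: at every point `x` one member of the net is within
`δ/2` of the translate taking the value `v b` at `x`, so the average lies in `K` and has
supremum at most `S - δ/(2k)`. Hence `v` is a constant.

For uniqueness, the convex combinations of translation operators are contractions that fix
constants and commute with each other. If `A u` and `B u` approximate the constants `c` and
`c'`, then `c - c' = B (c - A u) - A (c' - B u)` is small.
-/

open Set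

theorem Commute.of_mem_convexHull {R : Type*} [Semiring R] [Algebra ℝ R] {s : Set R}
    (hs : ∀ a ∈ s, ∀ b ∈ s, Commute a b) {a b : R} (ha : a ∈ convexHull ℝ s)
    (hb : b ∈ convexHull ℝ s) : Commute a b := by
  have hcentralizer_convex (t : Set R) : Convex ℝ t.centralizer := by
    have := (Subalgebra.centralizer ℝ t).toSubmodule.convex
    rwa [Subalgebra.coe_toSubmodule, Subalgebra.coe_centralizer] at this
  have hs_hull : convexHull ℝ s ⊆ s.centralizer :=
    convexHull_min (fun x hx m hm => (hs m hm x hx).eq) (hcentralizer_convex s)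
  have hhull_hull : convexHull ℝ s ⊆ (convexHull ℝ s).centralizer :=
    convexHull_min (fun x hx m hm => (hs_hull hm x hx).symm) (hcentralizer_convex _)
  exact (hhull_hull ha b hb).symm

theorem Finset.sum_le_card_mul_sub {ι : Type*} {s : Finset ι} {f : ι → ℝ} {S η : ℝ}
    (h : ∀ i ∈ s, f i ≤ S) {j : ι} (hj : j ∈ s) (hfj : f j ≤ S - η) :
    ∑ i ∈ s, f i ≤ s.card * S - η := by
  have : η ≤ ∑ i ∈ s, (S - f i) :=
    (by linarith : η ≤ S - f j).trans
      (Finset.single_le_sum (fun i hi => sub_nonneg.2 (h i hi)) hj)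
  rw [Finset.sum_sub_distrib, Finset.sum_const, nsmul_eq_mul] at this
  linarith

namespace BoundedContinuousFunction

theorem lipschitzWith_one_iSup {α : Type*} [TopologicalSpace α] [Nonempty α] :
    LipschitzWith 1 fun v : α →ᵇ ℝ => ⨆ x, v x :=
  LipschitzWith.of_le_add fun v w => ciSup_le fun x => by
    have hvw : dist (v x) (w x) ≤ dist v w := dist_coe_le_dist x
    rw [Real.dist_eq] at hvw
    have habs := le_abs_self (v x - w x)
    have hw : w x ≤ ⨆ y, w y := le_ciSup w.isBounded_range.bddAbove x
    linarith

section Translation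

variable {G : Type*} [AddCommGroup G] [TopologicalSpace G] [ContinuousAdd G]
  {β : Type*} [NormedAddCommGroup β] [NormedSpace ℝ β]

variable (β) in
noncomputable def translateCLM (a : G) : (G →ᵇ β) →L[ℝ] G →ᵇ β :=
  compContinuousCLM β ℝ (ContinuousMap.addRight a)

@[simp]
theorem translateCLM_apply (a : G) (f : G →ᵇ β) (x : G) :
    translateCLM β a f x = f (x + a) := rfl

theorem translateCLM_translateCLM (a b : G) (f : G →ᵇ β) :
    translateCLM β a (translateCLM β b f) = translateCLM β (b + a) f := by
  ext x
  simp [add_assoc, add_comm a b]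

theorem commute_translateCLM (a b : G) : Commute (translateCLM β a) (translateCLM β b) := by
  ext f x
  simp [add_right_comm]

theorem translateCLM_const (a : G) (c : β) : translateCLM β a (const G c) = const G c := rfl

theorem norm_translateCLM_le (a : G) : ‖translateCLM β a‖ ≤ 1 :=
  ContinuousLinearMap.opNorm_le_bound _ zero_le_one fun f =>
    (norm_compContinuous_le f _).trans_eq (one_mul _).symm

theorem translateCLM_mem_closure_convexHull {f v : G →ᵇ β}
    (hv : v ∈ closure (convexHull ℝ (range fun a => translateCLM β a f))) (b : G) :
    translateCLM β b v ∈ closure (convexHull ℝ (range fun a => translateCLM β a f)) := by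
  have hmaps : MapsTo (translateCLM β b) (convexHull ℝ (range fun a => translateCLM β a f))
      (convexHull ℝ (range fun a => translateCLM β a f)) := by
    rw [mapsTo_iff_image_subset, ← ContinuousLinearMap.coe_coe, LinearMap.image_convexHull]
    refine convexHull_mono ?_
    rintro _ ⟨_, ⟨a, rfl⟩, rfl⟩
    exact ⟨a + b, (translateCLM_translateCLM b a f).symm⟩
  exact hmaps.closure (translateCLM β b).continuous hv

variable (β) in
def averagingOperators : Set ((G →ᵇ β) →L[ℝ] G →ᵇ β) :=
  convexHull ℝ (range (translateCLM β))

theorem norm_le_one_of_mem_averagingOperators {A : (G →ᵇ β) →L[ℝ] G →ᵇ β}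
    (hA : A ∈ averagingOperators β) : ‖A‖ ≤ 1 := by
  have hball : averagingOperators β ⊆ Metric.closedBall (0 : (G →ᵇ β) →L[ℝ] G →ᵇ β) 1 :=
    convexHull_min (range_subset_iff.2 fun a => mem_closedBall_zero_iff.2 (norm_translateCLM_le a))
      (convex_closedBall 0 1)
  simpa using hball hA

theorem apply_const_of_mem_averagingOperators {A : (G →ᵇ β) →L[ℝ] G →ᵇ β}
    (hA : A ∈ averagingOperators β) (c : β) : A (const G c) = const G c := by
  have hconv : Convex ℝ {A : (G →ᵇ β) →L[ℝ] G →ᵇ β | A (const G c) = const G c} :=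
    (convex_singleton (const G c)).linear_preimage
      (ContinuousLinearMap.apply ℝ (G →ᵇ β) (const G c)).toLinearMap
  exact convexHull_min (range_subset_iff.2 fun a => translateCLM_const a c) hconv hA

theorem commute_of_mem_averagingOperators {A B : (G →ᵇ β) →L[ℝ] G →ᵇ β}
    (hA : A ∈ averagingOperators β) (hB : B ∈ averagingOperators β) : Commute A B := by
  refine Commute.of_mem_convexHull ?_ hA hB
  rintro _ ⟨a, rfl⟩ _ ⟨b, rfl⟩
  exact commute_translateCLM a b

theorem convexHull_range_translateCLM (f : G →ᵇ β) :
    convexHull ℝ (range fun a => translateCLM β a f) =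
      (fun A => A f) '' averagingOperators β := by
  have := (ContinuousLinearMap.apply ℝ (G →ᵇ β) f).toLinearMap.image_convexHull
    (range (translateCLM β))
  rw [← range_comp] at this
  exact this.symm

theorem dist_const_le_of_mem_averagingOperators (f : G →ᵇ β) (c c' : β)
    {A B : (G →ᵇ β) →L[ℝ] G →ᵇ β} (hA : A ∈ averagingOperators β)
    (hB : B ∈ averagingOperators β) :
    dist (const G c) (const G c') ≤ dist (const G c) (A f) + dist (const G c') (B f) := by
  have hBA : B (A f) = A (B f) :=
    DFunLike.congr_fun (commute_of_mem_averagingOperators hA hB).eq.symm f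
  have hdecomp : const G c - const G c' = B (const G c - A f) - A (const G c' - B f) := by
    rw [map_sub, map_sub, apply_const_of_mem_averagingOperators hB,
      apply_const_of_mem_averagingOperators hA, hBA]
    abel
  rw [dist_eq_norm, hdecomp, dist_eq_norm, dist_eq_norm]
  calc ‖B (const G c - A f) - A (const G c' - B f)‖
      ≤ ‖B‖ * ‖const G c - A f‖ + ‖A‖ * ‖const G c' - B f‖ :=
        (norm_sub_le _ _).trans (add_le_add (B.le_opNorm _) (A.le_opNorm _))
    _ ≤ 1 * ‖const G c - A f‖ + 1 * ‖const G c' - B f‖ := by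
        gcongr
        exacts [norm_le_one_of_mem_averagingOperators hB,
          norm_le_one_of_mem_averagingOperators hA]
    _ = ‖const G c - A f‖ + ‖const G c' - B f‖ := by ring

theorem const_eq_of_mem_closure_convexHull [Nonempty G] {f : G →ᵇ β} {c c' : β}
    (hc : const G c ∈ closure (convexHull ℝ (range fun a => translateCLM β a f)))
    (hc' : const G c' ∈ closure (convexHull ℝ (range fun a => translateCLM β a f))) :
    c = c' := by
  rw [convexHull_range_translateCLM] at hc hc'
  have hconst : const G c = const G c' := by
    refine eq_of_forall_dist_le fun ε hε => ?_
    obtain ⟨_, ⟨A, hA, rfl⟩, hAf⟩ := Metric.mem_closure_iff.1 hc (ε / 2) (half_pos hε)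
    obtain ⟨_, ⟨B, hB, rfl⟩, hBf⟩ := Metric.mem_closure_iff.1 hc' (ε / 2) (half_pos hε)
    linarith [dist_const_le_of_mem_averagingOperators f c c' hA hB]
  exact DFunLike.congr_fun hconst (Classical.arbitrary G)

theorem exists_mem_convexHull_iSup_lt {v : G →ᵇ ℝ}
    (hv : TotallyBounded (range fun a => translateCLM ℝ a v)) {b : G} (hb : v b < ⨆ x, v x) :
    ∃ w ∈ convexHull ℝ (range fun a => translateCLM ℝ a v), ⨆ x, w x < ⨆ x, v x := by
  have : Nonempty G := ⟨b⟩
  set S := ⨆ x, v x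
  set δ := S - v b
  have hδ : 0 < δ := sub_pos.2 hb
  obtain ⟨t, hts, htfin, hcover⟩ := Metric.finite_approx_of_totallyBounded hv (δ / 2) (half_pos hδ)
  lift t to Finset (G →ᵇ ℝ) using htfin
  have hle : ∀ g ∈ t, ∀ x, g x ≤ S := by
    intro g hg x
    obtain ⟨a, rfl⟩ := hts hg
    exact le_ciSup v.isBounded_range.bddAbove (x + a)
  -- the translate of `v` by `-x + b` takes the value `v b` at `x`
  have hnear : ∀ x, ∃ g ∈ t, g x ≤ S - δ / 2 := by
    intro x
    obtain ⟨g, hg, hdist⟩ := mem_iUnion₂.1 (hcover ⟨-x + b, rfl⟩)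
    have hgx : dist (translateCLM ℝ (-x + b) v x) (g x) < δ / 2 :=
      (dist_coe_le_dist x).trans_lt hdist
    rw [translateCLM_apply, add_neg_cancel_left, Real.dist_eq] at hgx
    refine ⟨g, hg, ?_⟩
    linarith [neg_abs_le (v b - g x)]
  obtain ⟨g₀, hg₀, -⟩ := hnear b
  have hk : (0 : ℝ) < t.card := Nat.cast_pos.2 (Finset.card_pos.2 ⟨g₀, hg₀⟩)
  refine ⟨∑ g ∈ t, (t.card : ℝ)⁻¹ • g, ?_, ?_⟩
  · refine (convex_convexHull ℝ _).sum_mem (fun _ _ => inv_nonneg.2 hk.le) ?_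
      (fun g hg => subset_convexHull ℝ _ (hts hg))
    rw [Finset.sum_const, nsmul_eq_mul, mul_inv_cancel₀ hk.ne']
  · have hw : ∀ x, (∑ g ∈ t, (t.card : ℝ)⁻¹ • g) x ≤ S - δ / 2 / t.card := by
      intro x
      obtain ⟨g, hg, hgx⟩ := hnear x
      simp only [coe_sum, coe_smul, Finset.sum_apply, smul_eq_mul, ← Finset.mul_sum]
      rw [inv_mul_le_iff₀ hk]
      calc ∑ g ∈ t, g x ≤ t.card * S - δ / 2 :=
            Finset.sum_le_card_mul_sub (fun g hg => hle g hg x) hg hgx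
        _ = t.card * (S - δ / 2 / t.card) := by field_simp
    calc ⨆ x, (∑ g ∈ t, (t.card : ℝ)⁻¹ • g) x ≤ S - δ / 2 / t.card := ciSup_le hw
      _ < S := sub_lt_self S (by positivity)

theorem exists_const_mem_of_isCompact [Nonempty G] {K : Set (G →ᵇ ℝ)} (hK : IsCompact K)
    (hKconv : Convex ℝ K) (hKne : K.Nonempty) (hKinv : ∀ v ∈ K, ∀ a, translateCLM ℝ a v ∈ K) :
    ∃ c, const G c ∈ K := by
  obtain ⟨v, hvK, hmin⟩ :=
    hK.exists_isMinOn hKne lipschitzWith_one_iSup.continuous.continuousOn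
  have hconst : ∀ b, ⨆ x, v x ≤ v b := by
    intro b
    by_contra! hb
    have hsub : range (fun a => translateCLM ℝ a v) ⊆ K := range_subset_iff.2 (hKinv v hvK)
    obtain ⟨w, hw, hlt⟩ := exists_mem_convexHull_iSup_lt (hK.totallyBounded.subset hsub) hb
    exact hlt.not_ge (hmin (convexHull_min hsub hKconv hw))
  refine ⟨⨆ x, v x, ?_⟩
  convert hvK
  ext x
  exact le_antisymm (hconst x) (le_ciSup v.isBounded_range.bddAbove x)

theorem exists_const_mem_closure_convexHull [Nonempty G] {f : G →ᵇ ℝ}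
    (hf : TotallyBounded (range fun a => translateCLM ℝ a f)) :
    ∃ c, const G c ∈ closure (convexHull ℝ (range fun a => translateCLM ℝ a f)) :=
  exists_const_mem_of_isCompact
    ((totallyBounded_convexHull.2 hf).closure.isCompact_of_isClosed isClosed_closure)
    (convex_convexHull ℝ _).closure
    ⟨f, subset_closure (subset_convexHull ℝ _ ⟨0, by ext; simp⟩)⟩
    (fun _ hv a => translateCLM_mem_closure_convexHull hv a)

end Translation

end BoundedContinuousFunction

theorem mean_value_existsUnique_general {N : ℕ}
    (u : EuclideanSpace ℝ (Fin N) →ᵇ ℝ)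
    (hap : IsCompact (closure (Set.range (RTranslate u)))) :
    ∃! c : ℝ, BoundedContinuousFunction.const (EuclideanSpace ℝ (Fin N)) c ∈
      closure (convexHull ℝ (Set.range (RTranslate u))) := by
  have hRTranslate : RTranslate u = fun a => translateCLM ℝ a u := rfl
  rw [hRTranslate] at hap ⊢
  obtain ⟨c, hc⟩ := exists_const_mem_closure_convexHull (hap.totallyBounded.subset subset_closure)
  exact ⟨c, hc, fun c' hc' => const_eq_of_mem_closure_convexHull hc' hc⟩

/-- for every almost periodic `u : ℝ^N → ℝ` there is a unique constant
`M(u)` such that the constant function with value `M(u)` lies in the sup-norm closure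
of the convex hull of the set of translates of `u`. -/
theorem mean_value_existsUnique {N : ℕ} (hN : 0 < N)
    (u : EuclideanSpace ℝ (Fin N) →ᵇ ℝ)
    (hap : IsCompact (closure (Set.range (RTranslate u)))) :
    ∃! c : ℝ, BoundedContinuousFunction.const (EuclideanSpace ℝ (Fin N)) c ∈
      closure (convexHull ℝ (Set.range (RTranslate u))) :=
  mean_value_existsUnique_general u hap
end

section
/- Mean value via ball averages: for every almost periodic function u : ℝ^N → ℝ there exists a real constant c such that the averages (1/|B_r(a)|) ∫_{B_r(a)} u(y) dy converge to c as r → ∞, uniformly with respect to the center a ∈ ℝ^N; in particular the limit c does not depend on a. -/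
/-!
Relative compactness of the translates gives Bohr's form of almost periodicity: for every `ε` the
`ε`-almost periods are relatively dense. Hence for large `r` the average over `B_r(a)` hardly
depends on `a`: moving the centre by at most `L` costs only a boundary shell of relative size
`O(L / r)`, and moving it by an `ε`-almost period costs at most `ε`. By Fubini, averaging the
`r`-averages over `B_R(0)` gives the same as averaging the `R`-averages over `B_r(0)`; comparing
both with the averages centred at `0` makes `r ↦ ⨍_{B_r(0)} u` Cauchy, and the uniformity in the
centre carries its limit to every centre.
-/

open BoundedContinuousFunction MeasureTheory

open Metric Set Filter Topology
open scoped ENNReal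

def IsBohrAlmostPeriodic {E F : Type*} [Add E] [PseudoMetricSpace E] [PseudoMetricSpace F]
    (u : E → F) : Prop :=
  ∀ ε > 0, ∃ L, ∀ a, ∃ τ, dist a τ ≤ L ∧ ∀ x, dist (u (x + τ)) (u x) ≤ ε

theorem BoundedContinuousFunction.isBohrAlmostPeriodic_of_isCompact_closure_range
    {E F : Type*} [SeminormedAddCommGroup E] [PseudoMetricSpace F] (u : E →ᵇ F)
    (hu : IsCompact (closure (range fun a : E =>
      u.compContinuous ⟨(· + a), continuous_add_const a⟩))) :
    IsBohrAlmostPeriodic u := by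
  set T : E → E →ᵇ F := fun a => u.compContinuous ⟨(· + a), continuous_add_const a⟩
  intro ε hε
  obtain ⟨t, ht⟩ := hu.elim_finite_subcover (fun b => ball (T b) ε) (fun _ => isOpen_ball)
    fun v hv => by
      obtain ⟨_, ⟨b, rfl⟩, hvb⟩ := Metric.mem_closure_iff.1 hv ε hε
      exact mem_iUnion.2 ⟨b, mem_ball.2 hvb⟩
  obtain ⟨L, hL⟩ := (isBounded_iff_subset_closedBall 0).1 t.finite_toSet.isBounded
  refine ⟨L, fun a => ?_⟩
  obtain ⟨b, hb, hab⟩ := mem_iUnion₂.1 (ht (subset_closure (mem_range_self a)))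
  refine ⟨a - b, by simpa [dist_eq_norm] using hL hb, fun x => ?_⟩
  have := (BoundedContinuousFunction.dist_coe_le_dist (x - b)).trans (mem_ball.1 hab).le
  simpa [T, sub_add_eq_add_sub, add_sub_assoc] using this

section MeasureTheoryLemmas

variable {α F : Type*} [MeasurableSpace α] {ν : Measure α}
  [NormedAddCommGroup F] [NormedSpace ℝ F] {f : α → F} {s t : Set α}

theorem norm_setIntegral_sub_setIntegral_le_of_subset {C : ℝ} (hst : s ⊆ t) (hs : MeasurableSet s)
    (ht : ν t ≠ ∞) (hf : IntegrableOn f t ν) (hC : ∀ x ∈ t, ‖f x‖ ≤ C) :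
    ‖∫ x in t, f x ∂ν - ∫ x in s, f x ∂ν‖ ≤ C * (ν.real t - ν.real s) := by
  rw [← setIntegral_sdiff hs hf hst, ← measureReal_sdiff hst hs ht]
  exact norm_setIntegral_le_of_norm_le_const ((measure_mono sdiff_subset).trans_lt ht.lt_top)
    fun x hx => hC x hx.1

theorem dist_setAverage_le_of_forall_dist_le [CompleteSpace F] {c : F} {δ : ℝ}
    (hs : MeasurableSet s) (hs₀ : ν s ≠ 0) (hs₁ : ν s ≠ ∞) (hf : IntegrableOn f s ν)
    (hδ : ∀ x ∈ s, dist (f x) c ≤ δ) :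
    dist (⨍ x in s, f x ∂ν) c ≤ δ :=
  (convex_closedBall c δ).set_average_mem isClosed_closedBall hs₀ hs₁
    (ae_restrict_of_forall_mem hs hδ) hf

end MeasureTheoryLemmas

theorem Continuous.integrableOn_ball {X F : Type*} [MetricSpace X] [ProperSpace X]
    [MeasurableSpace X] [OpensMeasurableSpace X] (μ : Measure X) [IsFiniteMeasureOnCompacts μ]
    [NormedAddCommGroup F] {f : X → F} (hf : Continuous f) (c : X) (r : ℝ) :
    IntegrableOn f (ball c r) μ :=
  (hf.continuousOn.integrableOn_compact (isCompact_closedBall c r)).mono_set ball_subset_closedBall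

theorem BoundedContinuousFunction.integrable_comp_add_prod_restrict {G F : Type*}
    [TopologicalSpace G] [Add G] [ContinuousAdd G] [SecondCountableTopology G] [MeasurableSpace G]
    [OpensMeasurableSpace G] (μ : Measure G) [NormedAddCommGroup F] (u : G →ᵇ F) {s t : Set G}
    (hs : μ s ≠ ∞) (ht : μ t ≠ ∞) :
    Integrable (fun p : G × G => u (p.2 + p.1)) ((μ.restrict s).prod (μ.restrict t)) := by
  have : IsFiniteMeasure (μ.restrict s) := isFiniteMeasure_restrict.2 hs
  have : IsFiniteMeasure (μ.restrict t) := isFiniteMeasure_restrict.2 ht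
  exact .of_bound (u.continuous.comp (continuous_snd.add continuous_fst)).aestronglyMeasurable
    ‖u‖ (ae_of_all _ fun p => u.norm_coe_le_norm _)

section HaarBalls

variable {E F : Type*} [NormedAddCommGroup E] [MeasurableSpace E] [BorelSpace E]
  (μ : Measure E) [μ.IsAddHaarMeasure] [NormedAddCommGroup F] [NormedSpace ℝ F]

theorem setAverage_ball_eq_smul_setIntegral_ball_zero (f : E → F) (a : E) (r : ℝ) :
    ⨍ y in ball a r, f y ∂μ = (μ.real (ball 0 r))⁻¹ • ∫ z in ball 0 r, f (z + a) ∂μ := by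
  have := (measurePreserving_add_right μ a).setIntegral_preimage_emb
    (MeasurableEquiv.addRight a).measurableEmbedding f (ball a r)
  rw [preimage_add_right_ball, sub_self] at this
  rw [setAverage_eq, this, Measure.addHaar_real_ball_center]

variable [ProperSpace E]

theorem dist_setAverage_ball_le (u : E →ᵇ F) {a b : E} {r d : ℝ} (hab : dist a b ≤ d) :
    dist (⨍ y in ball a r, u y ∂μ) (⨍ y in ball b r, u y ∂μ) ≤
      2 * ‖u‖ * ((μ.real (ball 0 r) - μ.real (ball 0 (r - d))) / μ.real (ball 0 r)) := by
  have hinner : ∀ c, ball a (r - d) ⊆ ball c r → ‖∫ y in ball c r, u y ∂μ -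
      ∫ y in ball a (r - d), u y ∂μ‖ ≤ ‖u‖ * (μ.real (ball 0 r) - μ.real (ball 0 (r - d))) :=
    fun c hc => by
      simpa only [Measure.addHaar_real_ball_center] using
        norm_setIntegral_sub_setIntegral_le_of_subset hc measurableSet_ball
          (measure_ball_lt_top (μ := μ)).ne (u.continuous.integrableOn_ball μ c r)
          fun x _ => u.norm_coe_le_norm x
  have ha := hinner a (ball_subset_ball (by linarith [dist_nonneg.trans hab]))
  have hb := hinner b fun y hy => by
    rw [mem_ball] at hy ⊢
    linarith [dist_triangle y a b]
  rw [dist_eq_norm, setAverage_eq, setAverage_eq, Measure.addHaar_real_ball_center μ a,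
    Measure.addHaar_real_ball_center μ b, ← smul_sub, norm_smul,
    Real.norm_of_nonneg (by positivity), ← sub_sub_sub_cancel_right _ _ (∫ y in ball a (r - d), u y ∂μ), mul_div_assoc', div_eq_inv_mul]
  gcongr
  linarith [norm_sub_le (∫ y in ball a r, u y ∂μ - ∫ y in ball a (r - d), u y ∂μ)
    (∫ y in ball b r, u y ∂μ - ∫ y in ball a (r - d), u y ∂μ)]

theorem dist_setAverage_ball_le_of_forall_dist_add_le [CompleteSpace F] {u : E →ᵇ F} {τ : E}
    {ε r : ℝ} (hτ : ∀ x, dist (u (x + τ)) (u x) ≤ ε) (hr : 0 < r) :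
    dist (⨍ y in ball τ r, u y ∂μ) (⨍ y in ball 0 r, u y ∂μ) ≤ ε := by
  have hτint : IntegrableOn (fun z => u (z + τ)) (ball 0 r) μ :=
    (u.continuous.comp (continuous_add_const τ)).integrableOn_ball μ 0 r
  have hint := u.continuous.integrableOn_ball μ 0 r
  rw [setAverage_ball_eq_smul_setIntegral_ball_zero μ _ τ, setAverage_eq, dist_eq_norm, ← smul_sub,
    ← integral_sub hτint hint, ← setAverage_eq, ← dist_zero_right]
  exact dist_setAverage_le_of_forall_dist_le measurableSet_ball (measure_ball_pos μ 0 hr).ne'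
    measure_ball_lt_top.ne (hτint.sub hint) fun x _ => by simpa [dist_eq_norm] using hτ x

theorem integrableOn_setAverage_ball (u : E →ᵇ F) (r R : ℝ) :
    IntegrableOn (fun a => ⨍ y in ball a r, u y ∂μ) (ball 0 R) μ := by
  simp only [setAverage_ball_eq_smul_setIntegral_ball_zero μ _ _ r]
  exact (u.integrable_comp_add_prod_restrict μ measure_ball_lt_top.ne
    measure_ball_lt_top.ne).integral_prod_left.smul _

theorem setAverage_ball_setAverage_ball_comm (u : E →ᵇ F) (r R : ℝ) :
    ⨍ a in ball 0 R, ⨍ y in ball a r, u y ∂μ ∂μ =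
      ⨍ z in ball 0 r, ⨍ y in ball z R, u y ∂μ ∂μ := by
  simp only [setAverage_ball_eq_smul_setIntegral_ball_zero, add_zero]
  rw [integral_smul, integral_smul, smul_smul, smul_smul, mul_comm,
    integral_integral_swap (u.integrable_comp_add_prod_restrict μ measure_ball_lt_top.ne
      measure_ball_lt_top.ne)]
  simp only [add_comm]

end HaarBalls

section FiniteDimensional

variable {E F : Type*} [NormedAddCommGroup E] [NormedSpace ℝ E] [FiniteDimensional ℝ E]
  [MeasurableSpace E] [BorelSpace E] (μ : Measure E) [μ.IsAddHaarMeasure]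
  [NormedAddCommGroup F] [NormedSpace ℝ F]

theorem tendsto_measureReal_ball_sub_div (x : ℝ) :
    Tendsto (fun r => (μ.real (ball (0 : E) r) - μ.real (ball 0 (r - x))) / μ.real (ball 0 r))
      atTop (𝓝 0) := by
  have hball : 0 < μ.real (ball (0 : E) 1) :=
    ENNReal.toReal_pos (measure_ball_pos μ 0 one_pos).ne' measure_ball_lt_top.ne
  have hscale : ∀ ρ > 0, μ.real (ball (0 : E) ρ) = ρ ^ Module.finrank ℝ E * μ.real (ball 0 1) :=
    fun ρ hρ => by
      rw [measureReal_def, measureReal_def, Measure.addHaar_ball_of_pos μ 0 hρ, ENNReal.toReal_mul,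
        ENNReal.toReal_ofReal (by positivity)]
  have hlim : Tendsto (fun r : ℝ => 1 - (1 - x * r⁻¹) ^ Module.finrank ℝ E) atTop
      (𝓝 (1 - (1 - x * 0) ^ Module.finrank ℝ E)) :=
    tendsto_const_nhds.sub ((tendsto_const_nhds.sub
      (tendsto_const_nhds.mul tendsto_inv_atTop_zero)).pow _)
  rw [mul_zero, sub_zero, one_pow, sub_self] at hlim
  refine hlim.congr' ?_
  filter_upwards [eventually_gt_atTop (max x 0)] with r hr
  have hr₀ : 0 < r := (le_max_right x 0).trans_lt hr
  rw [hscale r hr₀, hscale (r - x) (by linarith [le_max_left x 0]),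
    show 1 - x * r⁻¹ = (r - x) / r by field_simp, div_pow]
  field_simp

variable [CompleteSpace F] {u : E →ᵇ F}

theorem dist_setAverage_ball_zero_le_of_forall_dist_le {r R δ : ℝ} (hr : 0 < r) (hR : 0 < R)
    (hδ : ∀ a, dist (⨍ y in ball a r, u y ∂μ) (⨍ y in ball 0 r, u y ∂μ) ≤ δ) :
    dist (⨍ y in ball 0 R, u y ∂μ) (⨍ y in ball 0 r, u y ∂μ) ≤
      2 * ‖u‖ * ((μ.real (ball 0 R) - μ.real (ball 0 (R - r))) / μ.real (ball 0 R)) + δ := by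
  have hR_avg : dist (⨍ z in ball 0 r, ⨍ y in ball z R, u y ∂μ ∂μ) (⨍ y in ball 0 R, u y ∂μ) ≤
      2 * ‖u‖ * ((μ.real (ball 0 R) - μ.real (ball 0 (R - r))) / μ.real (ball 0 R)) :=
    dist_setAverage_le_of_forall_dist_le measurableSet_ball (measure_ball_pos μ 0 hr).ne'
      measure_ball_lt_top.ne (integrableOn_setAverage_ball μ u R r)
      fun z hz => dist_setAverage_ball_le μ u (mem_ball.1 hz).le
  have hr_avg : dist (⨍ a in ball 0 R, ⨍ y in ball a r, u y ∂μ ∂μ) (⨍ y in ball 0 r, u y ∂μ) ≤ δ :=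
    dist_setAverage_le_of_forall_dist_le measurableSet_ball (measure_ball_pos μ 0 hR).ne'
      measure_ball_lt_top.ne (integrableOn_setAverage_ball μ u r R) fun a _ => hδ a
  rw [setAverage_ball_setAverage_ball_comm] at hr_avg
  exact (dist_triangle_left _ _ _).trans (add_le_add hR_avg hr_avg)

theorem IsBohrAlmostPeriodic.eventually_dist_setAverage_ball_le (hu : IsBohrAlmostPeriodic u)
    {ε : ℝ} (hε : 0 < ε) :
    ∀ᶠ r in atTop, ∀ a, dist (⨍ y in ball a r, u y ∂μ) (⨍ y in ball 0 r, u y ∂μ) ≤ ε := by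
  obtain ⟨L, hL⟩ := hu (ε / 2) (half_pos hε)
  have hshell := ((tendsto_measureReal_ball_sub_div μ L).const_mul (2 * ‖u‖)).eventually_le_const
    (by rw [mul_zero]; positivity : 2 * ‖u‖ * 0 < ε / 2)
  filter_upwards [hshell, eventually_gt_atTop 0] with r hr hr₀ a
  obtain ⟨τ, haτ, hτ⟩ := hL a
  calc dist (⨍ y in ball a r, u y ∂μ) (⨍ y in ball 0 r, u y ∂μ)
      ≤ dist (⨍ y in ball a r, u y ∂μ) (⨍ y in ball τ r, u y ∂μ) +
        dist (⨍ y in ball τ r, u y ∂μ) (⨍ y in ball 0 r, u y ∂μ) := dist_triangle _ _ _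
    _ ≤ ε / 2 + ε / 2 := add_le_add ((dist_setAverage_ball_le μ u haτ).trans hr)
        (dist_setAverage_ball_le_of_forall_dist_add_le μ hτ hr₀)
    _ = ε := add_halves ε

theorem IsBohrAlmostPeriodic.cauchySeq_setAverage_ball_zero (hu : IsBohrAlmostPeriodic u) :
    CauchySeq fun r => ⨍ y in ball 0 r, u y ∂μ := by
  refine Metric.cauchySeq_iff.2 fun ε hε => ?_
  obtain ⟨r₀, hr₀⟩ := eventually_atTop.1
    ((hu.eventually_dist_setAverage_ball_le μ (by positivity : 0 < ε / 4)).and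
      (eventually_gt_atTop 0))
  have hclose : ∀ r ≥ r₀, ∀ᶠ R in atTop,
      dist (⨍ y in ball 0 R, u y ∂μ) (⨍ y in ball 0 r, u y ∂μ) < ε / 2 := fun r hr => by
    obtain ⟨hδ, hr_pos⟩ := hr₀ r hr
    have hshell := ((tendsto_measureReal_ball_sub_div μ r).const_mul (2 * ‖u‖)).eventually_lt_const
      (by rw [mul_zero]; positivity : 2 * ‖u‖ * 0 < ε / 4)
    filter_upwards [hshell, eventually_gt_atTop 0] with R hR hR_pos
    linarith [dist_setAverage_ball_zero_le_of_forall_dist_le μ hr_pos hR_pos hδ]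
  refine ⟨r₀, fun r hr r' hr' => ?_⟩
  obtain ⟨R, hR, hR'⟩ := ((hclose r hr).and (hclose r' hr')).exists
  linarith [dist_triangle_left (⨍ y in ball 0 r, u y ∂μ) (⨍ y in ball 0 r', u y ∂μ)
    (⨍ y in ball 0 R, u y ∂μ)]

theorem IsBohrAlmostPeriodic.exists_tendstoUniformly_setAverage_ball
    (hu : IsBohrAlmostPeriodic u) :
    ∃ c, TendstoUniformly (fun r a => ⨍ y in ball a r, u y ∂μ) (fun _ => c) atTop := by
  obtain ⟨c, hc⟩ := cauchySeq_tendsto_of_complete (hu.cauchySeq_setAverage_ball_zero μ)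
  refine ⟨c, Metric.tendstoUniformly_iff.2 fun ε hε => ?_⟩
  filter_upwards [hu.eventually_dist_setAverage_ball_le μ (half_pos hε),
    Metric.tendsto_nhds.1 hc _ (half_pos hε)] with r hr hrc a
  rw [dist_comm] at hrc
  linarith [hr a, dist_triangle_right c (⨍ y in ball a r, u y ∂μ) (⨍ y in ball 0 r, u y ∂μ)]

end FiniteDimensional

theorem mean_value_ball_averages_general {N : ℕ}
    (u : EuclideanSpace ℝ (Fin N) →ᵇ ℝ)
    (hap : IsCompact (closure (Set.range (RTranslate u)))) :
    ∃ c : ℝ, ∀ ε > (0 : ℝ), ∃ R : ℝ, ∀ r ≥ R, ∀ a : EuclideanSpace ℝ (Fin N),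
      |(volume (Metric.ball a r)).toReal⁻¹ * (∫ y in Metric.ball a r, u y) - c| < ε := by
  obtain ⟨c, hc⟩ := (u.isBohrAlmostPeriodic_of_isCompact_closure_range hap
    ).exists_tendstoUniformly_setAverage_ball volume
  refine ⟨c, fun ε hε => ?_⟩
  obtain ⟨R, hR⟩ := eventually_atTop.1 (Metric.tendstoUniformly_iff.1 hc ε hε)
  refine ⟨R, fun r hr a => ?_⟩
  simpa [dist_comm c, Real.dist_eq, setAverage_eq, measureReal_def] using hR r hr a

/-- for every almost periodic `u : ℝ^N → ℝ` there is a constant `c` such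
that the ball averages `(1/|B_r(a)|) ∫_{B_r(a)} u` converge to `c` as `r → ∞`,
uniformly with respect to the center `a ∈ ℝ^N`. -/
theorem mean_value_ball_averages {N : ℕ} (hN : 0 < N)
    (u : EuclideanSpace ℝ (Fin N) →ᵇ ℝ)
    (hap : IsCompact (closure (Set.range (RTranslate u)))) :
    ∃ c : ℝ, ∀ ε > (0 : ℝ), ∃ R : ℝ, ∀ r ≥ R, ∀ a : EuclideanSpace ℝ (Fin N),
      |(volume (Metric.ball a r)).toReal⁻¹ * (∫ y in Metric.ball a r, u y) - c| < ε :=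
  mean_value_ball_averages_general u hap
end

section
/- Weak* convergence of oscillating data: let u : ℝ^N → ℝ be bounded and Lebesgue measurable and suppose there is a constant c such that sup_{a ∈ ℝ^N} |(1/|B_r(a)|) ∫_{B_r(a)} u(y) dy − c| → 0 as r → ∞. Then for every f ∈ L¹(ℝ^N), ∫_{ℝ^N} u(x/ε) f(x) dx → c ∫_{ℝ^N} f(x) dx as ε → 0⁺. -/
/-!
Write `A_δ v x` for the mean of `v` over `B_δ(x)`. Rescaling turns the `δ`-means of `u(·/ε)` into
the `δ/ε`-means of `u`, so by hypothesis `A_δ[u(·/ε)] → c` uniformly as `ε → 0⁺`, for each `δ > 0`.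
By Fubini, `A_δ` is symmetric: `∫ A_δ U · g = ∫ U · A_δ g`. For continuous compactly supported `g`,
uniform continuity makes `‖g - A_δ g‖₁` small for small `δ`, hence
`∫ u(x/ε) g ≈ ∫ u(x/ε) A_δ g = ∫ A_δ[u(·/ε)] g → c ∫ g`, the first error being at most
`sup |u| · ‖g - A_δ g‖₁` whatever `ε` is. The bound `|∫ u(x/ε) f| ≤ sup |u| · ‖f‖₁` then carries
the convergence over to all of `L¹` by density.
-/

open MeasureTheory Filter Metric Set Topology
open scoped Pointwise ENNReal

theorem mul_div_add_one_lt {a b : ℝ} (ha : 0 ≤ a) (hb : 0 < b) : a * (b / (a + 1)) < b := by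
  rw [mul_div_assoc', div_lt_iff₀ (by positivity)]
  linarith

section MeasureSpace

variable {α : Type*} [MeasurableSpace α] {μ : Measure α}

theorem abs_integral_mul_le {F h : α → ℝ} {C : ℝ} (hh : Integrable h μ) (hFC : ∀ x, |F x| ≤ C) :
    |∫ x, F x * h x ∂μ| ≤ C * ∫ x, |h x| ∂μ := by
  rw [← integral_const_mul C (fun x => |h x|), ← Real.norm_eq_abs]
  refine norm_integral_le_of_norm_le (hh.abs.const_mul C) (ae_of_all _ fun x => ?_)
  rw [Real.norm_eq_abs, abs_mul]
  exact mul_le_mul_of_nonneg_right (hFC x) (abs_nonneg _)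

theorem abs_integral_mul_sub_integral_mul_le {F f g : α → ℝ} {C : ℝ}
    (hF : AEStronglyMeasurable F μ) (hFC : ∀ x, |F x| ≤ C) (hf : Integrable f μ)
    (hg : Integrable g μ) :
    |∫ x, F x * f x ∂μ - ∫ x, F x * g x ∂μ| ≤ C * ∫ x, |f x - g x| ∂μ := by
  have hFbdd : ∀ᵐ x ∂μ, ‖F x‖ ≤ C := ae_of_all _ hFC
  rw [← integral_sub (hf.bdd_mul hF hFbdd) (hg.bdd_mul hF hFbdd)]
  simp_rw [← mul_sub]
  exact abs_integral_mul_le (hf.sub hg) hFC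

theorem abs_setAverage_sub_le {s : Set α} {f : α → ℝ} {a τ : ℝ} (h₀ : μ s ≠ 0)
    (h_fin : μ s ≠ ∞) (hf : IntegrableOn f s μ) (hτ : ∀ y ∈ s, |f y - a| ≤ τ) :
    |⨍ y in s, f y ∂μ - a| ≤ τ := by
  have hpos : 0 < μ.real s := ENNReal.toReal_pos h₀ h_fin
  have hsub : ⨍ y in s, f y ∂μ - a = (μ.real s)⁻¹ * ∫ y in s, (f y - a) ∂μ := by
    rw [setAverage_eq, integral_sub hf (integrableOn_const h_fin), setIntegral_const,
      smul_eq_mul, smul_eq_mul]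
    field_simp
  rw [hsub, abs_mul, abs_inv, abs_of_pos hpos, inv_mul_le_iff₀ hpos, mul_comm]
  exact norm_setIntegral_le_of_norm_le_const (f := fun y => f y - a) h_fin.lt_top hτ

variable [TopologicalSpace α] [NormalSpace α] [R1Space α] [BorelSpace α]
  [WeaklyLocallyCompactSpace α] [μ.Regular] {ι : Type*} {l : Filter ι}

theorem tendsto_integral_mul_of_forall_hasCompactSupport {F : ι → α → ℝ} {C c : ℝ}
    (hF : ∀ i, AEStronglyMeasurable (F i) μ) (hFC : ∀ i x, |F i x| ≤ C)
    (h : ∀ g : α → ℝ, Continuous g → HasCompactSupport g →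
      Tendsto (fun i => ∫ x, F i x * g x ∂μ) l (𝓝 (c * ∫ x, g x ∂μ)))
    {f : α → ℝ} (hf : Integrable f μ) :
    Tendsto (fun i => ∫ x, F i x * f x ∂μ) l (𝓝 (c * ∫ x, f x ∂μ)) := by
  rw [Metric.tendsto_nhds]
  intro η hη
  set ρ := η / 2 / (|C| + |c| + 1)
  have hρ_pos : 0 < ρ := by positivity
  have hρ : (|C| + |c|) * ρ < η / 2 := mul_div_add_one_lt (by positivity) (half_pos hη)
  obtain ⟨g, hgc, hfg, hg, hg_int⟩ := hf.exists_hasCompactSupport_integral_sub_le hρ_pos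
  simp only [Real.norm_eq_abs] at hfg
  filter_upwards [Metric.tendsto_nhds.1 (h g hg hgc) (η / 2) (half_pos hη)] with i hi
  rw [Real.dist_eq] at hi ⊢
  have hFfg := abs_integral_mul_sub_integral_mul_le (hF i) (hFC i) hf hg_int
  have hcfg : |c * ∫ x, f x ∂μ - c * ∫ x, g x ∂μ| ≤ |c| * ∫ x, |f x - g x| ∂μ := by
    simpa only [integral_const_mul] using
      abs_integral_mul_sub_integral_mul_le aestronglyMeasurable_const (fun _ => le_refl |c|)
        hf hg_int
  have hfg0 : 0 ≤ ∫ x, |f x - g x| ∂μ := integral_nonneg fun _ => abs_nonneg _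
  have hC := mul_le_mul_of_nonneg_right (le_abs_self C) hfg0
  have hCc := mul_le_mul_of_nonneg_left hfg (add_nonneg (abs_nonneg C) (abs_nonneg c))
  have h₁ := abs_sub_le (∫ x, F i x * f x ∂μ) (∫ x, F i x * g x ∂μ) (c * ∫ x, f x ∂μ)
  have h₂ := abs_sub_le (∫ x, F i x * g x ∂μ) (c * ∫ x, g x ∂μ) (c * ∫ x, f x ∂μ)
  rw [abs_sub_comm (c * ∫ x, g x ∂μ)] at h₂
  linarith

end MeasureSpace

noncomputable def ballAverage {X : Type*} [PseudoMetricSpace X] [MeasurableSpace X]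
    (μ : Measure X) (δ : ℝ) (f : X → ℝ) (x : X) : ℝ :=
  ⨍ y in ball x δ, f y ∂μ

noncomputable def ballKernel {X : Type*} [PseudoMetricSpace X] (δ : ℝ) (g U : X → ℝ) :
    X × X → ℝ :=
  {p : X × X | p.2 ∈ ball p.1 δ}.indicator fun p => g p.1 * U p.2

section BallKernel

variable {X : Type*} [PseudoMetricSpace X] [MeasurableSpace X] [OpensMeasurableSpace X]
  {μ : Measure X} {δ : ℝ} {g U : X → ℝ}

theorem integral_ballKernel_left (x : X) :
    ∫ y, ballKernel δ g U (x, y) ∂μ = g x * ∫ y in ball x δ, U y ∂μ := by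
  rw [← integral_const_mul, ← integral_indicator measurableSet_ball]
  rfl

theorem integral_ballKernel_right (y : X) :
    ∫ x, ballKernel δ g U (x, y) ∂μ = (∫ x in ball y δ, g x ∂μ) * U y := by
  rw [← integral_mul_const, ← integral_indicator measurableSet_ball]
  congr 1 with x
  simp only [ballKernel, indicator, mem_ofPred_eq, mem_ball, dist_comm]

end BallKernel

section HaarMeasure

variable {E : Type*} [NormedAddCommGroup E] [MeasurableSpace E] [BorelSpace E] (μ : Measure E)
  [μ.IsAddHaarMeasure]

theorem ballAverage_eq (δ : ℝ) (f : E → ℝ) (x : E) :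
    ballAverage μ δ f x = (μ.real (ball 0 δ))⁻¹ * ∫ y in ball x δ, f y ∂μ := by
  rw [ballAverage, setAverage_eq, measureReal_def, Measure.addHaar_ball_center, smul_eq_mul,
    measureReal_def]

variable [NormedSpace ℝ E] [FiniteDimensional ℝ E]

theorem ballAverage_comp_smul {R : ℝ} (hR : 0 < R)
    (δ : ℝ) (f : E → ℝ) (x : E) :
    ballAverage μ δ (fun y => f (R • y)) x = ballAverage μ (R * δ) f (R • x) := by
  have hball : R • ball x δ = ball (R • x) (R * δ) := by
    rw [_root_.smul_ball hR.ne', Real.norm_of_nonneg hR.le]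
  simp only [ballAverage, setAverage_eq, Measure.setIntegral_comp_smul_of_pos μ _ _ hR, ← hball,
    measureReal_def, Measure.addHaar_smul_of_nonneg μ hR.le, ENNReal.toReal_mul,
    ENNReal.toReal_ofReal (pow_nonneg hR.le _), smul_eq_mul, mul_inv]
  ring

section Symmetry

variable {δ C : ℝ} {g U : E → ℝ}

theorem integrable_ballKernel (hg : Integrable g μ) (hU : AEStronglyMeasurable U μ)
    (hUC : ∀ y, |U y| ≤ C) : Integrable (ballKernel δ g U) (μ.prod μ) := by
  have hslice : ∀ x y, ballKernel δ g U (x, y) = (ball x δ).indicator (fun y => g x * U y) y :=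
    fun _ _ => rfl
  have hmeas : AEStronglyMeasurable (ballKernel δ g U) (μ.prod μ) :=
    (hg.aestronglyMeasurable.comp_fst.mul hU.comp_snd).indicator
      (measurableSet_lt (f := fun p : E × E => dist p.2 p.1) (by fun_prop) measurable_const)
  refine (integrable_prod_iff hmeas).2 ⟨ae_of_all _ fun x => ?_, ?_⟩
  · simp_rw [hslice, integrable_indicator_iff measurableSet_ball]
    exact (Measure.integrableOn_of_bounded measure_ball_lt_top.ne hU
      (ae_of_all _ hUC)).const_mul (g x)
  · refine ((hg.abs.mul_const C).mul_const (μ.real (ball 0 δ))).mono'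
      hmeas.norm.integral_prod_right' (ae_of_all _ fun x => ?_)
    simp_rw [hslice, norm_indicator_eq_indicator_norm, integral_indicator measurableSet_ball]
    rw [measureReal_def, ← Measure.addHaar_ball_center μ x, ← measureReal_def]
    refine norm_setIntegral_le_of_norm_le_const measure_ball_lt_top fun y _ => ?_
    rw [norm_norm, norm_mul]
    exact mul_le_mul_of_nonneg_left (hUC y) (norm_nonneg _)

theorem integrable_ballAverage_mul (hg : Integrable g μ) (hU : AEStronglyMeasurable U μ)
    (hUC : ∀ y, |U y| ≤ C) : Integrable (fun x => ballAverage μ δ U x * g x) μ := by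
  refine ((integrable_ballKernel μ (δ := δ) hg hU hUC).integral_prod_left.const_mul
    (μ.real (ball 0 δ))⁻¹).congr (ae_of_all _ fun x => ?_)
  simp only [integral_ballKernel_left, ballAverage_eq]
  ring

theorem integrable_mul_ballAverage (hg : Integrable g μ) (hU : AEStronglyMeasurable U μ)
    (hUC : ∀ y, |U y| ≤ C) : Integrable (fun x => U x * ballAverage μ δ g x) μ := by
  refine ((integrable_ballKernel μ (δ := δ) hg hU hUC).integral_prod_right.const_mul
    (μ.real (ball 0 δ))⁻¹).congr (ae_of_all _ fun x => ?_)
  simp only [integral_ballKernel_right, ballAverage_eq]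
  ring

theorem integrable_ballAverage (hg : Integrable g μ) : Integrable (ballAverage μ δ g) μ := by
  simpa using integrable_mul_ballAverage μ (δ := δ) hg aestronglyMeasurable_const
    (fun _ => (abs_one (α := ℝ)).le)

theorem integral_ballAverage_mul (hg : Integrable g μ) (hU : AEStronglyMeasurable U μ)
    (hUC : ∀ y, |U y| ≤ C) :
    ∫ x, ballAverage μ δ U x * g x ∂μ = ∫ x, U x * ballAverage μ δ g x ∂μ := by
  have hswap := integral_integral_swap (f := fun x y => ballKernel δ g U (x, y))
    (integrable_ballKernel μ hg hU hUC)
  simp only [integral_ballKernel_left, integral_ballKernel_right] at hswap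
  simp only [ballAverage_eq, mul_assoc, mul_left_comm (U _), integral_const_mul]
  congr 1
  simp only [mul_comm _ (g _), mul_comm (U _)]
  exact hswap

end Symmetry

theorem exists_integral_abs_sub_ballAverage_le {g : E → ℝ} (hg : Continuous g)
    (hgc : HasCompactSupport g) {η : ℝ} (hη : 0 < η) :
    ∃ δ > 0, ∫ x, |g x - ballAverage μ δ g x| ∂μ ≤ η := by
  set K := cthickening 1 (tsupport g)
  have hK : IsCompact K := hgc.cthickening
  set τ := η / (μ.real K + 1)
  obtain ⟨δ₀, hδ₀, hg_uc⟩ := Metric.uniformContinuous_iff.1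
    (hg.uniformContinuous_of_tendsto_cocompact hgc.is_zero_at_infty) τ (by positivity)
  set δ := min δ₀ 1
  refine ⟨δ, by positivity, ?_⟩
  have hpt : ∀ x, |g x - ballAverage μ δ g x| ≤ K.indicator (fun _ => τ) x := by
    intro x
    rw [abs_sub_comm]
    refine abs_setAverage_sub_le (measure_ball_pos μ x (by positivity)).ne'
      measure_ball_lt_top.ne (hg.integrable_of_hasCompactSupport hgc).integrableOn fun y hy => ?_
    have hyx : dist y x < δ := hy
    by_cases hx : x ∈ K
    · rw [indicator_of_mem hx, ← Real.dist_eq]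
      exact (hg_uc (hyx.trans_le (min_le_left _ _))).le
    · have hy' : y ∉ tsupport g := fun hyg => hx <| mem_cthickening_of_dist_le x y 1 _ hyg <| by
        rw [dist_comm]; exact hyx.le.trans (min_le_right _ _)
      have hx' : x ∉ tsupport g := fun hxg => hx (self_subset_cthickening _ hxg)
      rw [indicator_of_notMem hx, image_eq_zero_of_notMem_tsupport hy',
        image_eq_zero_of_notMem_tsupport hx', sub_zero, abs_zero]
  calc ∫ x, |g x - ballAverage μ δ g x| ∂μ ≤ ∫ x, K.indicator (fun _ => τ) x ∂μ :=
        integral_mono_of_nonneg (ae_of_all _ fun _ => abs_nonneg _)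
          ((integrable_indicator_iff hK.measurableSet).2 (integrableOn_const hK.measure_lt_top.ne))
          (ae_of_all _ hpt)
    _ = τ * μ.real K := by rw [integral_indicator_const _ hK.measurableSet, smul_eq_mul, mul_comm]
    _ ≤ η := by rw [mul_comm]; exact (mul_div_add_one_lt measureReal_nonneg hη).le

variable {ι : Type*} {l : Filter ι} {F : ι → E → ℝ} {C c : ℝ}

theorem tendsto_integral_mul_of_tendstoUniformly_ballAverage_of_hasCompactSupport
    (hF : ∀ i, AEStronglyMeasurable (F i) μ) (hFC : ∀ i x, |F i x| ≤ C)
    (hFc : ∀ δ > 0, TendstoUniformly (fun i => ballAverage μ δ (F i)) (fun _ => c) l)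
    {g : E → ℝ} (hg : Continuous g) (hgc : HasCompactSupport g) :
    Tendsto (fun i => ∫ x, F i x * g x ∂μ) l (𝓝 (c * ∫ x, g x ∂μ)) := by
  have hg_int := hg.integrable_of_hasCompactSupport (μ := μ) hgc
  rw [Metric.tendsto_nhds]
  intro η hη
  set M := ∫ x, |g x| ∂μ
  have hM : 0 ≤ M := integral_nonneg fun _ => abs_nonneg _
  obtain ⟨δ, hδ, hgδ⟩ := exists_integral_abs_sub_ballAverage_le μ hg hgc
    (show 0 < η / 2 / (|C| + 1) by positivity)
  filter_upwards [Metric.tendstoUniformly_iff.1 (hFc δ hδ) (η / 2 / (M + 1)) (by positivity)]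
    with i hi
  have hsplit : ∫ x, F i x * g x ∂μ - c * ∫ x, g x ∂μ =
      (∫ x, F i x * g x ∂μ - ∫ x, F i x * ballAverage μ δ g x ∂μ)
        + ∫ x, (ballAverage μ δ (F i) x - c) * g x ∂μ := by
    simp only [sub_mul]
    rw [integral_sub (integrable_ballAverage_mul μ hg_int (hF i) (hFC i)) (hg_int.const_mul c),
      integral_ballAverage_mul μ hg_int (hF i) (hFC i), integral_const_mul]
    ring
  have h₁ := abs_integral_mul_sub_integral_mul_le (hF i) (hFC i) hg_int
    (integrable_ballAverage μ (δ := δ) hg_int)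
  have h₂ : |∫ x, (ballAverage μ δ (F i) x - c) * g x ∂μ| ≤ η / 2 / (M + 1) * M :=
    abs_integral_mul_le hg_int fun x => by rw [abs_sub_comm, ← Real.dist_eq]; exact (hi x).le
  have h₃ := mul_le_mul_of_nonneg_right (le_abs_self C)
    (integral_nonneg (μ := μ) fun x => abs_nonneg (g x - ballAverage μ δ g x))
  have h₄ := mul_le_mul_of_nonneg_left hgδ (abs_nonneg C)
  have h₅ := mul_div_add_one_lt (abs_nonneg C) (half_pos hη)
  have h₆ : η / 2 / (M + 1) * M < η / 2 := by
    rw [mul_comm]; exact mul_div_add_one_lt hM (half_pos hη)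
  rw [Real.dist_eq, hsplit]
  linarith [abs_add_le (∫ x, F i x * g x ∂μ - ∫ x, F i x * ballAverage μ δ g x ∂μ)
    (∫ x, (ballAverage μ δ (F i) x - c) * g x ∂μ)]

theorem tendsto_integral_mul_of_tendstoUniformly_ballAverage
    (hF : ∀ i, AEStronglyMeasurable (F i) μ) (hFC : ∀ i x, |F i x| ≤ C)
    (hFc : ∀ δ > 0, TendstoUniformly (fun i => ballAverage μ δ (F i)) (fun _ => c) l)
    {f : E → ℝ} (hf : Integrable f μ) :
    Tendsto (fun i => ∫ x, F i x * f x ∂μ) l (𝓝 (c * ∫ x, f x ∂μ)) :=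
  tendsto_integral_mul_of_forall_hasCompactSupport hF hFC (fun _ hg hgc =>
    tendsto_integral_mul_of_tendstoUniformly_ballAverage_of_hasCompactSupport μ hF hFC hFc hg hgc)
    hf

end HaarMeasure

theorem weak_star_convergence_oscillating_data_general {N : ℕ}
    (u : EuclideanSpace ℝ (Fin N) → ℝ) (hmeas : Measurable u)
    (hbdd : ∃ C : ℝ, ∀ y, |u y| ≤ C) (c : ℝ)
    (havg : ∀ ε > (0 : ℝ), ∃ R : ℝ, ∀ r ≥ R, ∀ a : EuclideanSpace ℝ (Fin N),
      |(volume (Metric.ball a r)).toReal⁻¹ * (∫ y in Metric.ball a r, u y) - c| < ε)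
    (f : EuclideanSpace ℝ (Fin N) → ℝ) (hf : Integrable f) :
    Tendsto (fun ε : ℝ => ∫ x, u (ε⁻¹ • x) * f x)
      (nhdsWithin 0 (Set.Ioi 0)) (nhds (c * ∫ x, f x)) := by
  obtain ⟨C, hC⟩ := hbdd
  refine tendsto_integral_mul_of_tendstoUniformly_ballAverage volume
    (F := fun ε x => u (ε⁻¹ • x))
    (fun ε => (hmeas.comp (measurable_const_smul ε⁻¹)).aestronglyMeasurable)
    (fun ε x => hC _) (fun δ hδ => ?_) hf
  rw [Metric.tendstoUniformly_iff]
  intro η hη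
  obtain ⟨R, hR⟩ := havg η hη
  filter_upwards [(tendsto_inv_nhdsGT_zero.atTop_mul_const hδ).eventually_ge_atTop R,
    self_mem_nhdsWithin] with ε hεR hε x
  rw [ballAverage_comp_smul volume (inv_pos.2 hε), dist_comm, Real.dist_eq]
  simpa only [ballAverage, setAverage_eq, measureReal_def, smul_eq_mul] using hR _ hεR (ε⁻¹ • x)

/-- weak* convergence of oscillating data.  If `u : ℝ^N → ℝ` is bounded
and measurable, and its ball averages converge to a constant `c` as the radius tends
to `∞`, uniformly in the center, then `∫ u(x/ε) f(x) dx → c ∫ f(x) dx` as `ε → 0⁺`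
for every integrable `f`. -/
theorem weak_star_convergence_oscillating_data {N : ℕ} (hN : 0 < N)
    (u : EuclideanSpace ℝ (Fin N) → ℝ) (hmeas : Measurable u)
    (hbdd : ∃ C : ℝ, ∀ y, |u y| ≤ C) (c : ℝ)
    (havg : ∀ ε > (0 : ℝ), ∃ R : ℝ, ∀ r ≥ R, ∀ a : EuclideanSpace ℝ (Fin N),
      |(volume (Metric.ball a r)).toReal⁻¹ * (∫ y in Metric.ball a r, u y) - c| < ε)
    (f : EuclideanSpace ℝ (Fin N) → ℝ) (hf : Integrable f) :
    Tendsto (fun ε : ℝ => ∫ x, u (ε⁻¹ • x) * f x)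
      (nhdsWithin 0 (Set.Ioi 0)) (nhds (c * ∫ x, f x)) :=
  weak_star_convergence_oscillating_data_general u hmeas hbdd c havg f hf
end
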